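/- arXiv:2401.04783 — 4 statements merged into one kernel-verified Lean document; each statement's English description precedes it below -/
import Mathlib

section
/- Let n ≥ 2 and let H = (h_{ij}) be a real n×n unreduced lower Hessenberg matrix with associated polynomial sequence {q_i}_{0 ≤ i ≤ n}. If λ ∈ ℝ is a root of q_n, then λ is an eigenvalue of H and the nonzero vector v = (q_0(λ), q_1(λ), ..., q_{n−1}(λ))ᵀ satisfies H v = λ v. -/
/-- The superdiagonal entry `h_{i+1, i+2}` (1-based) of `H`, with the convention
`h_{n, n+1} = 1`.  Here `i` is 0-based. -/
def superEntry {n : ℕ} (H : Matrix (Fin n) (Fin n) ℝ) (i : ℕ) : ℝ :=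
  if h : i + 1 < n then H ⟨i, by omega⟩ ⟨i + 1, h⟩ else 1

/-- The entry `h_{i+1, j+1}` (1-based) of `H`, with `0` outside the matrix.
Here `i, j` are 0-based. -/
def lowEntry {n : ℕ} (H : Matrix (Fin n) (Fin n) ℝ) (i j : ℕ) : ℝ :=
  if h : i < n ∧ j < n then H ⟨i, h.1⟩ ⟨j, h.2⟩ else 0

/-- `H` is an unreduced lower Hessenberg matrix: `h_{ij} = 0` for `j > i + 1`
(1-based), and all superdiagonal entries `h_{i,i+1}` are nonzero. -/
def IsUnreducedLowerHessenberg {n : ℕ} (H : Matrix (Fin n) (Fin n) ℝ) : Prop :=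
  (∀ i j : Fin n, (i : ℕ) + 1 < (j : ℕ) → H i j = 0) ∧
  (∀ i : ℕ, ∀ h : i + 1 < n, H ⟨i, by omega⟩ ⟨i + 1, h⟩ ≠ 0)

/-- The associated polynomial sequence of a matrix `H` (intended: unreduced lower
Hessenberg): `q 0 = 1` and
`q (i+1) = (1 / h_{i+1,i+2}) * (X * q i − ∑_{j=0}^{i} h_{i+1,j+1} * q j)`
(1-based entries), with the convention `h_{n,n+1} = 1`. -/
noncomputable def assocPoly {n : ℕ} (H : Matrix (Fin n) (Fin n) ℝ) : ℕ → Polynomial ℝ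
  | 0 => 1
  | i + 1 =>
      Polynomial.C (superEntry H i)⁻¹ *
        (Polynomial.X * assocPoly H i -
          ∑ j : Fin (i + 1), Polynomial.C (lowEntry H i j) * assocPoly H j)


open Finset Polynomial

section Hessenberg

variable {n : ℕ} (H : Matrix (Fin n) (Fin n) ℝ)

lemma lowEntry_of_lt {i j : ℕ} (hi : i < n) (hj : j < n) :
    lowEntry H i j = H ⟨i, hi⟩ ⟨j, hj⟩ := by
  simp [lowEntry, hi, hj]

lemma lowEntry_of_le {i j : ℕ} (hj : n ≤ j) : lowEntry H i j = 0 := by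
  simp [lowEntry, hj.not_gt]

lemma superEntry_of_lt {i : ℕ} (hi : i + 1 < n) : superEntry H i = lowEntry H i (i + 1) := by
  simp [superEntry, lowEntry, hi, (Nat.lt_succ_self i).trans hi]

lemma superEntry_of_not_lt {i : ℕ} (hi : ¬ i + 1 < n) : superEntry H i = 1 := by
  simp [superEntry, hi]

variable {H}

lemma IsUnreducedLowerHessenberg.lowEntry_eq_zero (hH : IsUnreducedLowerHessenberg H)
    {i j : ℕ} (hij : i + 1 < j) : lowEntry H i j = 0 := by
  unfold lowEntry
  split_ifs with h
  · exact hH.1 _ _ hij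
  · rfl

lemma IsUnreducedLowerHessenberg.superEntry_ne_zero (hH : IsUnreducedLowerHessenberg H)
    (i : ℕ) : superEntry H i ≠ 0 := by
  unfold superEntry
  split_ifs with h
  · exact hH.2 i h
  · exact one_ne_zero

lemma IsUnreducedLowerHessenberg.mulVec_apply (hH : IsUnreducedLowerHessenberg H)
    (v : ℕ → ℝ) (i : Fin n) :
    H.mulVec (fun j : Fin n => v j) i =
      ∑ j ∈ range (i + 1), lowEntry H i j * v j + lowEntry H i (i + 1) * v (i + 1) := by
  have hrange : H.mulVec (fun j : Fin n => v j) i = ∑ j ∈ range n, lowEntry H i j * v j := by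
    simp only [Matrix.mulVec, dotProduct]
    rw [← Fin.sum_univ_eq_sum_range (fun j => lowEntry H i j * v j)]
    simp only [lowEntry_of_lt H i.isLt, Fin.is_lt, Fin.eta]
  have htail :
      ∑ j ∈ Ico (i + 1 : ℕ) n, lowEntry H i j * v j = lowEntry H i (i + 1) * v (i + 1) := by
    refine sum_eq_single _ (fun j hj hne => ?_) (fun hnot => ?_)
    · rw [hH.lowEntry_eq_zero (by grind), zero_mul]
    · rw [lowEntry_of_le H (by grind), zero_mul]
  rw [hrange, ← sum_range_add_sum_Ico _ i.isLt, htail]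

lemma superEntry_mul_eval_assocPoly_succ {i : ℕ} (hi : superEntry H i ≠ 0) (lam : ℝ) :
    superEntry H i * (assocPoly H (i + 1)).eval lam =
      lam * (assocPoly H i).eval lam -
        ∑ j ∈ range (i + 1), lowEntry H i j * (assocPoly H j).eval lam := by
  rw [assocPoly, eval_mul, eval_C, ← mul_assoc, mul_inv_cancel₀ hi, one_mul, eval_sub, eval_mul,
    eval_X, eval_finsetSum,
    ← Fin.sum_univ_eq_sum_range (fun j => lowEntry H i j * (assocPoly H j).eval lam)]
  simp only [eval_mul, eval_C]

/-- The recurrence defining `q_{i+1}` is row `i` of the eigenvalue equation; only the last row,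
where `h_{n,n+1} = 1` stands in for a missing entry, sees `q_n`. -/
lemma IsUnreducedLowerHessenberg.mulVec_eval_assocPoly_apply (hH : IsUnreducedLowerHessenberg H)
    (lam : ℝ) (i : Fin n) :
    H.mulVec (fun j : Fin n => (assocPoly H j).eval lam) i =
      lam * (assocPoly H i).eval lam -
        if (i : ℕ) + 1 = n then (assocPoly H n).eval lam else 0 := by
  have hrec := superEntry_mul_eval_assocPoly_succ (hH.superEntry_ne_zero i) lam
  rw [hH.mulVec_apply (fun j => (assocPoly H j).eval lam)]
  by_cases hi : (i : ℕ) + 1 < n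
  · rw [superEntry_of_lt H hi] at hrec
    rw [if_neg hi.ne]
    linarith
  · have hlast : (i : ℕ) + 1 = n := by omega
    rw [superEntry_of_not_lt H hi, one_mul] at hrec
    have hqn : (assocPoly H n).eval lam = (assocPoly H (i + 1)).eval lam := by rw [hlast]
    rw [if_pos hlast, lowEntry_of_le H hlast.ge, hqn]
    linarith

end Hessenberg

/-- **Roots of `q_n` are eigenvalues of an unreduced lower Hessenberg matrix.**
If `λ` is a real root of the last associated polynomial `q_n` of an unreduced
lower Hessenberg matrix `H`, then `λ` is an eigenvalue of `H`, with nonzero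
eigenvector `v = (q_0(λ), q_1(λ), …, q_{n−1}(λ))ᵀ`. -/
theorem assocPoly_root_eigenvector (n : ℕ) (hn : 2 ≤ n)
    (H : Matrix (Fin n) (Fin n) ℝ) (hH : IsUnreducedLowerHessenberg H)
    (lam : ℝ) (hroot : (assocPoly H n).eval lam = 0) :
    (fun i : Fin n => (assocPoly H i).eval lam) ≠ 0 ∧
    H.mulVec (fun i : Fin n => (assocPoly H i).eval lam) =
      lam • (fun i : Fin n => (assocPoly H i).eval lam) := by
  refine ⟨fun hv => ?_, funext fun i => ?_⟩
  · have hq0 := congrFun hv ⟨0, by omega⟩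
    simp [assocPoly] at hq0
  · rw [hH.mulVec_eval_assocPoly_apply, hroot, ite_self, sub_zero, Pi.smul_apply, smul_eq_mul]
end

section
/- Let n ≥ 2 and let H be a real n×n unreduced lower Hessenberg matrix. Then H is diagonalizable over ℝ (i.e. there is an invertible real matrix P and a diagonal real matrix D with H = P D P⁻¹) if and only if the characteristic polynomial of H has n pairwise distinct real roots (equivalently, all eigenvalues of H are real and distinct). -/
open Polynomial Matrix

namespace HessAux

/-- An eigenvector of an unreduced lower Hessenberg matrix with zero first
coordinate is zero. -/
lemma eigvec_eq_zero {n : ℕ} (hn : 0 < n) (H : Matrix (Fin n) (Fin n) ℝ)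
    (hH : IsUnreducedLowerHessenberg H) (lam : ℝ) (v : Fin n → ℝ)
    (hv : H.mulVec v = lam • v) (h0 : v ⟨0, hn⟩ = 0) : v = 0 := by
  have key : ∀ m : ℕ, ∀ hm : m < n, v ⟨m, hm⟩ = 0 := by
    intro m
    induction m using Nat.strong_induction_on with
    | _ m IH =>
      intro hm
      match m, hm with
      | 0, hm => exact h0
      | Nat.succ i, hm =>
        have hrowv : H.mulVec v ⟨i, by omega⟩ = lam * v ⟨i, by omega⟩ := by
          rw [hv]; rfl
        have hvi : v ⟨i, by omega⟩ = 0 := IH i (by omega) (by omega)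
        have hsum : H.mulVec v ⟨i, by omega⟩
            = H ⟨i, by omega⟩ ⟨i + 1, hm⟩ * v ⟨i + 1, hm⟩ := by
          simp only [Matrix.mulVec, dotProduct]
          apply Finset.sum_eq_single
          · intro j _ hj
            rcases lt_trichotomy (j : ℕ) (i + 1) with h | h | h
            · have hj0 : v j = 0 := by
                have := IH j.val (by omega) j.isLt
                simpa using this
              rw [hj0, mul_zero]
            · exact absurd (Fin.ext (by simpa using h)) hj
            · rw [hH.1 _ _ (by simpa using h), zero_mul]
          · intro h; exact absurd (Finset.mem_univ _) h
        have hne := hH.2 i hm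
        have hz : H ⟨i, by omega⟩ ⟨i + 1, hm⟩ * v ⟨i + 1, hm⟩ = 0 := by
          rw [← hsum, hrowv, hvi, mul_zero]
        exact (mul_eq_zero.mp hz).resolve_left hne
  funext k
  simpa using key k.val k.isLt

lemma charpoly_diag {n : ℕ} (d : Fin n → ℝ) :
    (Matrix.diagonal d).charpoly = ∏ i, (X - C (d i)) := by
  rw [Matrix.charpoly]
  have h : charmatrix (Matrix.diagonal d) = Matrix.diagonal fun i => X - C (d i) := by
    ext i j
    by_cases h : i = j
    · subst h; simp [charmatrix_apply_eq]
    · simp [charmatrix_apply_ne _ _ _ h, Matrix.diagonal_apply_ne _ h]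
  rw [h, Matrix.det_diagonal]

lemma charpoly_conj {n : ℕ} (P A : Matrix (Fin n) (Fin n) ℝ) (hP : IsUnit P.det) :
    (P * A * P⁻¹).charpoly = A.charpoly := by
  have h1 : P * P⁻¹ = 1 := Matrix.mul_nonsing_inv P hP
  set f : Matrix (Fin n) (Fin n) ℝ →+* Matrix (Fin n) (Fin n) ℝ[X] := (C : ℝ →+* ℝ[X]).mapMatrix with hf
  have hcomm : ∀ B : Matrix (Fin n) (Fin n) ℝ[X],
      Matrix.scalar (Fin n) (X : ℝ[X]) * B = B * Matrix.scalar (Fin n) (X : ℝ[X]) :=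
    fun B => (Matrix.scalar_commute (X : ℝ[X]) (fun r => Commute.all _ _) B).eq
  have hPP : f P * f P⁻¹ = 1 := by rw [← _root_.map_mul, h1, _root_.map_one]
  have key : charmatrix (P * A * P⁻¹) = f P * charmatrix A * f P⁻¹ := by
    unfold charmatrix
    rw [show C.mapMatrix (P * A * P⁻¹) = f (P * A * P⁻¹) from rfl, _root_.map_mul, _root_.map_mul, Matrix.mul_sub, Matrix.sub_mul]
    congr 1
    rw [← hcomm (f P), Matrix.mul_assoc, hPP, Matrix.mul_one]
  rw [Matrix.charpoly, key, Matrix.det_mul, Matrix.det_mul, Matrix.charpoly]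
  have h2 : (f P).det * (f P⁻¹).det = 1 := by
    rw [← Matrix.det_mul, hPP, Matrix.det_one]
  calc (f P).det * (charmatrix A).det * (f P⁻¹).det
      = (charmatrix A).det * ((f P).det * (f P⁻¹).det) := by ring
    _ = (charmatrix A).det := by rw [h2, mul_one]

end HessAux

/-- **Hyperbolicity criterion for unreduced lower Hessenberg matrices.**
A real `n × n` unreduced lower Hessenberg matrix `H` is diagonalizable over `ℝ`
(there exist an invertible real matrix `P` and a diagonal real matrix `D` with
`H = P * D * P⁻¹`) if and only if its characteristic polynomial has `n` pairwise
distinct real roots, i.e. all eigenvalues of `H` are real and distinct. -/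
theorem hessenberg_diagonalizable_iff_charpoly_distinct_real_roots
    (n : ℕ) (hn : 2 ≤ n)
    (H : Matrix (Fin n) (Fin n) ℝ) (hH : IsUnreducedLowerHessenberg H) :
    (∃ P D : Matrix (Fin n) (Fin n) ℝ, IsUnit P.det ∧ D.IsDiag ∧ H = P * D * P⁻¹) ↔
    (Multiset.card H.charpoly.roots = n ∧ H.charpoly.roots.Nodup) := by
  classical
  constructor
  · rintro ⟨P, D, hPdet, hDdiag, hHeq⟩
    set d : Fin n → ℝ := fun i => D i i with hd
    have hDeq : D = Matrix.diagonal d := by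
      ext i j
      by_cases h : i = j
      · subst h; simp [Matrix.diagonal_apply_eq, d]
      · rw [Matrix.diagonal_apply_ne _ h]; exact hDdiag h
    have hchar : H.charpoly = ∏ i, (X - C (d i)) := by
      rw [hHeq, hDeq, HessAux.charpoly_conj _ _ hPdet, HessAux.charpoly_diag]
    have hroots : H.charpoly.roots = Finset.univ.val.map d := by
      rw [hchar]
      have h2 : (∏ i : Fin n, (X - C (d i)))
          = ((Finset.univ.val.map d).map (fun a => X - C a)).prod := by
        rw [Multiset.map_map]; rfl
      rw [h2, Polynomial.roots_multiset_prod_X_sub_C]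
    have hmulinj : ∀ x : Fin n → ℝ, P.mulVec x = 0 → x = 0 := by
      intro x hx
      have h3 : (P⁻¹ * P).mulVec x = 0 := by
        rw [← Matrix.mulVec_mulVec, hx, Matrix.mulVec_zero]
      rwa [Matrix.nonsing_inv_mul _ hPdet, Matrix.one_mulVec] at h3
    have hHPD : H * P = P * D := by
      rw [hHeq, Matrix.nonsing_inv_mul_cancel_right _ _ hPdet]
    have hcol : ∀ l : Fin n, H.mulVec (fun k => P k l) = d l • fun k => P k l := by
      intro l; funext k
      have h1 : (H * P) k l = H.mulVec (fun k' => P k' l) k := by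
        simp [Matrix.mul_apply, Matrix.mulVec, dotProduct]
      have h2 : (P * D) k l = d l * P k l := by
        rw [hDeq, Matrix.mul_diagonal, mul_comm]
      calc H.mulVec (fun k' => P k' l) k = (H * P) k l := h1.symm
        _ = (P * D) k l := by rw [hHPD]
        _ = (d l • fun k' => P k' l) k := by rw [h2]; rfl
    have hdinj : Function.Injective d := by
      intro i j hij
      by_contra hne
      set e0 : Fin n := ⟨0, by omega⟩ with he0
      set u : Fin n → ℝ := fun k => P k i with hu
      set w : Fin n → ℝ := fun k => P k j with hw
      set z : Fin n → ℝ := w e0 • u - u e0 • w with hzdef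
      have hz : H.mulVec z = d i • z := by
        rw [hzdef, Matrix.mulVec_sub, Matrix.mulVec_smul, Matrix.mulVec_smul,
          hcol i, hcol j, ← hij]
        rw [smul_sub]
        congr 1
        · rw [smul_comm]
        · rw [smul_comm]
      have hz0 : z e0 = 0 := by
        simp only [hzdef, Pi.sub_apply, Pi.smul_apply, smul_eq_mul]
        ring
      have hzz : z = 0 := HessAux.eigvec_eq_zero (by omega) H hH (d i) z hz hz0
      have husingle : u = P.mulVec (Pi.single i 1) := by
        funext k; simp [hu]
      have hwsingle : w = P.mulVec (Pi.single j 1) := by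
        funext k; simp [hw]
      have hPz : P.mulVec (w e0 • (Pi.single i 1 : Fin n → ℝ) - u e0 • (Pi.single j 1 : Fin n → ℝ)) = 0 := by
        rw [Matrix.mulVec_sub, Matrix.mulVec_smul, Matrix.mulVec_smul, ← husingle,
          ← hwsingle, ← hzdef, hzz]
      have hx := hmulinj _ hPz
      have hwi : w e0 = 0 := by
        have h4 := congrFun hx i
        simpa [Pi.single_apply, hne, Ne.symm hne] using h4
      have hui : u e0 = 0 := by
        have h4 := congrFun hx j
        simpa [Pi.single_apply, hne, Ne.symm hne] using h4
      have hu0 : u = 0 := HessAux.eigvec_eq_zero (by omega) H hH (d i) u (hcol i) hui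
      have hs0 : Pi.single i (1 : ℝ) = 0 := hmulinj _ (by rw [← husingle]; exact hu0)
      have h5 := congrFun hs0 i
      simp at h5
    constructor
    · rw [hroots]; simp
    · rw [hroots]
      exact Multiset.Nodup.map hdinj Finset.univ.nodup
  · rintro ⟨hcard, hnodup⟩
    haveI : Nonempty (Fin n) := ⟨⟨0, by omega⟩⟩
    set s := H.charpoly.roots.toFinset with hs
    have hscard : s.card = n := by
      rw [hs, Multiset.toFinset_card_of_nodup hnodup, hcard]
    have hchar0 : H.charpoly ≠ 0 := H.charpoly_monic.ne_zero
    set e := s.equivFin with he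
    set μ : Fin n → ℝ := fun i => (e.symm (Fin.cast hscard.symm i) : ℝ) with hμ
    have hμinj : Function.Injective μ := by
      intro a b hab
      have h1 := e.symm.injective (Subtype.ext hab)
      exact Fin.ext (by simpa using congrArg Fin.val h1)
    have hμroot : ∀ i, μ i ∈ H.charpoly.roots := fun i =>
      Multiset.mem_toFinset.mp (e.symm (Fin.cast hscard.symm i)).2
    have hvec : ∀ i, ∃ v : Fin n → ℝ, v ≠ 0 ∧ H.mulVec v = μ i • v := by
      intro i
      have hroot : H.charpoly.IsRoot (μ i) :=
        ((Polynomial.mem_roots hchar0).mp (hμroot i))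
      have hdet : ((μ i) • (1 : Matrix (Fin n) (Fin n) ℝ) - H).det = 0 := by
        have h1 : Polynomial.eval (μ i) H.charpoly = 0 := hroot
        rw [Matrix.charpoly, ← Polynomial.coe_evalRingHom, RingHom.map_det] at h1
        have hmap : (charmatrix H).map (Polynomial.evalRingHom (μ i))
            = (μ i) • (1 : Matrix (Fin n) (Fin n) ℝ) - H := by
          ext k l
          by_cases hkl : k = l
          · subst hkl
            simp [charmatrix_apply_eq, Matrix.sub_apply, Matrix.smul_apply,
              Matrix.one_apply_eq]
          · simp [charmatrix_apply_ne _ _ _ hkl, Matrix.sub_apply, Matrix.smul_apply,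
              Matrix.one_apply_ne hkl]
        rwa [RingHom.mapMatrix_apply, hmap] at h1
      obtain ⟨v, hv0, hveq⟩ := (Matrix.exists_mulVec_eq_zero_iff).mpr hdet
      refine ⟨v, hv0, ?_⟩
      rw [Matrix.sub_mulVec, Matrix.smul_mulVec, Matrix.one_mulVec,
        sub_eq_zero] at hveq
      exact hveq.symm
    choose v hvne hveig using hvec
    have hli : LinearIndependent ℝ v :=
      Module.End.eigenvectors_linearIndependent' (Matrix.toLin' H) μ hμinj v
        (fun i => ⟨Module.End.mem_eigenspace_iff.mpr
          (by rw [Matrix.toLin'_apply, hveig i]), hvne i⟩)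
    have hfr : Fintype.card (Fin n) = Module.finrank ℝ (Fin n → ℝ) := by
      simp
    set b := basisOfLinearIndependentOfCardEqFinrank hli hfr with hb
    set P := (Pi.basisFun ℝ (Fin n)).toMatrix ⇑b with hP
    have hPb : ∀ k i, P k i = v i k := by
      intro k i
      rw [hP, Module.Basis.toMatrix_apply, hb, coe_basisOfLinearIndependentOfCardEqFinrank]
      simp
    haveI := (Pi.basisFun ℝ (Fin n)).invertibleToMatrix b
    have hPdet : IsUnit P.det := (Matrix.isUnit_iff_isUnit_det _).mp (isUnit_of_invertible P)
    refine ⟨P, Matrix.diagonal μ, hPdet, Matrix.isDiag_diagonal μ, ?_⟩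
    have hHP : H * P = P * Matrix.diagonal μ := by
      ext k i
      rw [Matrix.mul_diagonal]
      have h1 : (H * P) k i = (H.mulVec (v i)) k := by
        simp [Matrix.mul_apply, Matrix.mulVec, dotProduct, hPb]
      rw [h1, hveig i]
      simp [hPb, mul_comm]
    calc H = H * P * P⁻¹ := by rw [Matrix.mul_nonsing_inv_cancel_right _ _ hPdet]
      _ = P * Matrix.diagonal μ * P⁻¹ := by rw [hHP]
end

section
/- Fix M ≥ 6. Given real parameters ρ > 0, θ > 0, u ∈ ℝ and f_3, ..., f_M ∈ ℝ (with the conventions f_1 = f_2 = 0), let A^{ML} be the (M+1)×(M+1) real matrix with rows and columns indexed 1,...,M+1 whose first four rows are (u, ρ, 0, ..., 0), (θ/ρ, u, 1, 0, ..., 0), (0, 2θ, u, 6/ρ, 0, ..., 0), (0, 4f_3, ρθ/2, u, 4, 0, ..., 0); whose row k for 5 ≤ k ≤ M has entries h_{k,1} = −θ f_{k−2}/ρ, h_{k,2} = k f_{k−1}, h_{k,3} = (θ/2) f_{k−4} + ((k−2)/2) f_{k−2}, h_{k,4} = −(3/ρ) f_{k−3} (this entry only for k ≥ 6), h_{k,k−1}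 = θ, h_{k,k} = u, h_{k,k+1} = k, and all other entries 0; and whose last row (row M+1) is (a_0, a_1, ..., a_M) for given reals a_0, ..., a_M. Then A^{ML} is an unreduced lower Hessenberg matrix (its superdiagonal entries ρ, 1, 6/ρ, 4, 5, ..., M are all nonzero), and its associated polynomial sequence satisfies, with z = (x − u)/√θ: q_0(x) = 1, q_1(x) = (θ^{1/2}/ρ)·He_1(z), q_2(x) = (θ/ρ)·He_2(z), q_3(x) = (θ^{3/2}/6)·He_3(z), and for every k with 4 ≤ k ≤ M, q_k(x) = (θ^{k/2}/k!)·He_k(z) − (θ f_{k−2}/(2ρ))·He_2(z) − (θ^{1/2} f_{k−1}/ρ)·He_1(z), for all x ∈ ℝ. -/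
/-- The probabilists' Hermite polynomials, as real functions:
`He 0 x = 1`, `He 1 x = x`, `He (k+1) x = x * He k x − k * He (k−1) x`. -/
noncomputable def He : ℕ → ℝ → ℝ
  | 0, _ => 1
  | 1, x => x
  | n + 2, x => x * He (n + 1) x - ((n : ℝ) + 1) * He n x

/-- The coefficient matrix `A^{ML}` of the machine-learned moment closure system for the
BGK equation, of size `(M+1) × (M+1)`, built from the primitive variables
`ρ, u, θ`, the higher moments `f : ℕ → ℝ` (with the conventions `f 1 = f 2 = 0`
imposed as hypotheses), and the last-row entries `a 0, …, a M`.  Rows and columns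
are indexed `1, …, M+1` (internally `0`-based). -/
noncomputable def mlClosureMatrix (M : ℕ) (ρ u θ : ℝ) (f : ℕ → ℝ) (a : ℕ → ℝ) :
    Matrix (Fin (M + 1)) (Fin (M + 1)) ℝ :=
  Matrix.of fun i j =>
    let r : ℕ := (i : ℕ) + 1
    let c : ℕ := (j : ℕ) + 1
    if r = 1 then (if c = 1 then u else if c = 2 then ρ else 0)
    else if r = 2 then (if c = 1 then θ / ρ else if c = 2 then u else if c = 3 then 1 else 0)
    else if r = 3 then (if c = 2 then 2 * θ else if c = 3 then u else if c = 4 then 6 / ρ else 0)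
    else if r = 4 then
      (if c = 2 then 4 * f 3 else if c = 3 then ρ * θ / 2 else if c = 4 then u
       else if c = 5 then 4 else 0)
    else if r ≤ M then
      (if c = 1 then -(θ * f (r - 2)) / ρ
       else if c = 2 then (r : ℝ) * f (r - 1)
       else if c = 3 then θ / 2 * f (r - 4) + ((r : ℝ) - 2) / 2 * f (r - 2)
       else if c = 4 ∧ 6 ≤ r then -(3 / ρ) * f (r - 3)
       else if c = r - 1 then θ
       else if c = r then u
       else if c = r + 1 then (r : ℝ)
       else 0)
    else a (c - 1)

/-! Put `y = x - u` and let `P_k(y) = θ^{k/2} He_k(y/√θ) / k!` be the Hermite polynomials of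
variance `θ`, normalised by `k!`; they satisfy `(k+1) P_{k+1} = y P_k - θ P_{k-1}`.  From the
fifth row on, `A^{ML}` has `θ, u, k` around the diagonal, which is exactly this recurrence, plus
entries in the first four columns.  Evaluated on `q_0, …, q_3`, which are explicit, those extra
entries reproduce the correction `- f_{k-2} (y² - θ)/(2ρ) - f_{k-1} y/ρ` in the next row.  Since
`f_1 = f_2 = 0`, the corrected formula already holds for `k = 3, 4`, and a two-step induction
reaches every `k ≤ M`. -/

open Finset Polynomial

noncomputable def hermiteScaled (θ : ℝ) : ℕ → ℝ → ℝ
  | 0, _ => 1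
  | 1, y => y
  | k + 2, y => (y * hermiteScaled θ (k + 1) y - θ * hermiteScaled θ k y) / (k + 2)

theorem hermiteScaled_sq (s : ℝ) (hs : s ≠ 0) :
    ∀ k y, hermiteScaled (s ^ 2) k y = s ^ k / k.factorial * He k (y / s)
  | 0, y => by simp [hermiteScaled, He]
  | 1, y => by
    simp only [hermiteScaled, pow_one, Nat.factorial_one, Nat.cast_one, div_one, He]
    field_simp
  | k + 2, y => by
    rw [hermiteScaled, hermiteScaled_sq s hs k, hermiteScaled_sq s hs (k + 1), He,
      Nat.factorial_succ (k + 1), Nat.factorial_succ k]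
    push_cast
    field_simp
    ring

theorem He_two (z : ℝ) : He 2 z = z ^ 2 - 1 := by
  simp only [He, CharP.cast_eq_zero, zero_add, mul_one]
  ring

theorem assocPoly_zero {n : ℕ} (H : Matrix (Fin n) (Fin n) ℝ) : assocPoly H 0 = 1 := by
  rw [assocPoly]

theorem eval_assocPoly_succ {n : ℕ} (H : Matrix (Fin n) (Fin n) ℝ) (i : ℕ) (x : ℝ) :
    (assocPoly H (i + 1)).eval x = (superEntry H i)⁻¹ *
      (x * (assocPoly H i).eval x -
        ∑ j ∈ range (i + 1), lowEntry H i j * (assocPoly H j).eval x) := by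
  simp [assocPoly, eval_finsetSum,
    Fin.sum_univ_eq_sum_range (fun j => lowEntry H i j * (assocPoly H j).eval x)]

section
variable {M : ℕ} {ρ u θ : ℝ} {f a : ℕ → ℝ}

local notation "A" => mlClosureMatrix M ρ u θ f a

theorem superEntry_mlClosureMatrix_zero (hM : 0 < M) : superEntry A 0 = ρ := by
  simp [superEntry, mlClosureMatrix, hM]

theorem superEntry_mlClosureMatrix_one : superEntry A 1 = 1 := by
  simp [superEntry, mlClosureMatrix]

theorem superEntry_mlClosureMatrix_two (hM : 2 < M) : superEntry A 2 = 6 / ρ := by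
  simp [superEntry, mlClosureMatrix, show 3 ≤ M by omega]

theorem superEntry_mlClosureMatrix_of_three_le {i : ℕ} (h3 : 3 ≤ i) (hi : i < M) :
    superEntry A i = i + 1 := by
  simp only [superEntry, mlClosureMatrix, dif_pos (show i + 1 < M + 1 by omega), Matrix.of_apply]
  obtain rfl | h4 := h3.eq_or_lt
  · norm_num
  · simp (disch := omega) only [if_neg, if_pos]
    push_cast; ring

theorem sum_lowEntry_mlClosureMatrix_zero_mul (g : ℕ → ℝ) :
    ∑ j ∈ range 1, lowEntry A 0 j * g j = u * g 0 := by
  simp [lowEntry, mlClosureMatrix]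

theorem sum_lowEntry_mlClosureMatrix_one_mul (hM : 1 < M) (g : ℕ → ℝ) :
    ∑ j ∈ range 2, lowEntry A 1 j * g j = θ / ρ * g 0 + u * g 1 := by
  simp [sum_range_succ, lowEntry, mlClosureMatrix, show 0 < M ∧ 1 ≤ M by omega]

theorem sum_lowEntry_mlClosureMatrix_two_mul (hM : 2 < M) (g : ℕ → ℝ) :
    ∑ j ∈ range 3, lowEntry A 2 j * g j = 2 * θ * g 1 + u * g 2 := by
  simp [sum_range_succ, lowEntry, mlClosureMatrix, show 1 ≤ M ∧ 2 ≤ M by omega]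

theorem sum_lowEntry_mlClosureMatrix_three_mul (hM : 3 < M) (g : ℕ → ℝ) :
    ∑ j ∈ range 4, lowEntry A 3 j * g j = 4 * f 3 * g 1 + ρ * θ / 2 * g 2 + u * g 3 := by
  simp [sum_range_succ, lowEntry, mlClosureMatrix, show 1 ≤ M ∧ 2 ≤ M ∧ 3 ≤ M by omega]

theorem lowEntry_mlClosureMatrix_succ {m j : ℕ} (hm : 3 ≤ m) (hmM : m + 1 < M) (hj : j ≤ m + 1)
    (hf2 : f 2 = 0) :
    lowEntry A (m + 1) j =
      (if j = 0 then -(θ * f m) / ρ else 0) + (if j = 1 then ((m : ℝ) + 2) * f (m + 1) else 0)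
      + (if j = 2 then θ / 2 * f (m - 2) + (m : ℝ) / 2 * f m else 0)
      + (if j = 3 then -(3 / ρ) * f (m - 1) else 0)
      + (if j = m then θ else 0) + (if j = m + 1 then u else 0) := by
  simp only [lowEntry, mlClosureMatrix, dif_pos (show m + 1 < M + 1 ∧ j < M + 1 by omega),
    Matrix.of_apply]
  simp (disch := omega) only [if_neg, if_pos]
  rcases j with _ | _ | _ | _ | j
  · simp (disch := omega) only [if_neg, show m + 1 + 1 - 2 = m by omega]
    ring
  · simp (disch := omega) only [if_neg]
    push_cast; ring
  · simp (disch := omega) only [if_neg, show m + 1 + 1 - 4 = m - 2 by omega,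
      show m + 1 + 1 - 2 = m by omega]
    push_cast; ring
  · -- in row 5, column 4 is the subdiagonal and holds only `θ`; the formula agrees as `f 2 = 0`
    obtain rfl | h4 := hm.eq_or_lt
    · simp [hf2]
    · simp (disch := omega) only [if_neg, if_pos, true_and, if_true,
        show m + 1 + 1 - 3 = m - 1 by omega]
      ring
  · by_cases hjm : j + 4 = m
    · simp (disch := omega) only [if_neg, if_pos]
      ring
    · simp (disch := omega) only [if_neg]
      split_ifs <;> first | omega | ring

theorem sum_lowEntry_mlClosureMatrix_succ_mul {m : ℕ} (hm : 3 ≤ m) (hmM : m + 1 < M)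
    (hf2 : f 2 = 0) (g : ℕ → ℝ) :
    ∑ j ∈ range (m + 2), lowEntry A (m + 1) j * g j =
      -(θ * f m) / ρ * g 0 + ((m : ℝ) + 2) * f (m + 1) * g 1
      + (θ / 2 * f (m - 2) + (m : ℝ) / 2 * f m) * g 2 - 3 / ρ * f (m - 1) * g 3
      + θ * g m + u * g (m + 1) := by
  rw [sum_congr rfl fun j hj => by
    rw [lowEntry_mlClosureMatrix_succ hm hmM (Nat.le_of_lt_succ (mem_range.mp hj)) hf2]]
  simp only [add_mul, ite_mul, zero_mul, sum_add_distrib, sum_ite_eq', mem_range]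
  simp (disch := omega) only [if_pos]
  ring

theorem mlClosureMatrix_apply_eq_zero_of_lt (i j : Fin (M + 1)) (hij : (i : ℕ) + 1 < j) :
    A i j = 0 := by
  obtain ⟨i, hi⟩ := i
  obtain ⟨j, hj⟩ := j
  dsimp only at hij
  simp only [mlClosureMatrix, Matrix.of_apply]
  simp (disch := omega) only [if_neg, if_pos, ite_self]

theorem superEntry_mlClosureMatrix_ne_zero (hρ : ρ ≠ 0) {i : ℕ} (hi : i < M) :
    superEntry A i ≠ 0 := by
  obtain rfl | rfl | rfl | h3 : i = 0 ∨ i = 1 ∨ i = 2 ∨ 3 ≤ i := by omega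
  · simpa [superEntry_mlClosureMatrix_zero hi]
  · simp [superEntry_mlClosureMatrix_one]
  · simpa [superEntry_mlClosureMatrix_two hi]
  · rw [superEntry_mlClosureMatrix_of_three_le h3 hi]
    positivity

theorem isUnreducedLowerHessenberg_mlClosureMatrix (hρ : ρ ≠ 0) :
    IsUnreducedLowerHessenberg A := by
  refine ⟨mlClosureMatrix_apply_eq_zero_of_lt, fun i hi => ?_⟩
  simpa [superEntry, hi] using superEntry_mlClosureMatrix_ne_zero hρ (by omega : i < M)

theorem eval_assocPoly_mlClosureMatrix_one (hM : 0 < M) (x : ℝ) :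
    (assocPoly A 1).eval x = (x - u) / ρ := by
  rw [eval_assocPoly_succ, superEntry_mlClosureMatrix_zero hM,
    sum_lowEntry_mlClosureMatrix_zero_mul, assocPoly_zero, eval_one]
  ring

theorem eval_assocPoly_mlClosureMatrix_two (hM : 1 < M) (hρ : ρ ≠ 0) (x : ℝ) :
    (assocPoly A 2).eval x = ((x - u) ^ 2 - θ) / ρ := by
  rw [eval_assocPoly_succ, superEntry_mlClosureMatrix_one, sum_lowEntry_mlClosureMatrix_one_mul hM,
    assocPoly_zero, eval_one, eval_assocPoly_mlClosureMatrix_one (by omega)]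
  field_simp
  ring

theorem eval_assocPoly_mlClosureMatrix_three (hM : 2 < M) (hρ : ρ ≠ 0) (x : ℝ) :
    (assocPoly A 3).eval x = hermiteScaled θ 3 (x - u) := by
  rw [eval_assocPoly_succ, superEntry_mlClosureMatrix_two hM,
    sum_lowEntry_mlClosureMatrix_two_mul hM, eval_assocPoly_mlClosureMatrix_one (by omega),
    eval_assocPoly_mlClosureMatrix_two (by omega) hρ]
  simp only [hermiteScaled]
  field_simp
  ring

theorem eval_assocPoly_mlClosureMatrix_four (hM : 3 < M) (hρ : ρ ≠ 0) (x : ℝ) :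
    (assocPoly A 4).eval x = hermiteScaled θ 4 (x - u) - f 3 * (x - u) / ρ := by
  rw [eval_assocPoly_succ, superEntry_mlClosureMatrix_of_three_le le_rfl hM,
    sum_lowEntry_mlClosureMatrix_three_mul hM, eval_assocPoly_mlClosureMatrix_one (by omega),
    eval_assocPoly_mlClosureMatrix_two (by omega) hρ, eval_assocPoly_mlClosureMatrix_three (by omega) hρ]
  simp only [hermiteScaled]
  field_simp
  ring

theorem eval_assocPoly_mlClosureMatrix_of_three_le (hρ : ρ ≠ 0) (hf1 : f 1 = 0) (hf2 : f 2 = 0)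
    {k : ℕ} (hk : 3 ≤ k) (hkM : k ≤ M) (x : ℝ) :
    (assocPoly A k).eval x = hermiteScaled θ k (x - u)
      - f (k - 2) * ((x - u) ^ 2 - θ) / (2 * ρ) - f (k - 1) * (x - u) / ρ := by
  induction k using Nat.strong_induction_on with
  | _ k ih =>
  obtain rfl | rfl | hk5 : k = 3 ∨ k = 4 ∨ 5 ≤ k := by omega
  · simp [eval_assocPoly_mlClosureMatrix_three hkM hρ, hf1, hf2]
  · simp [eval_assocPoly_mlClosureMatrix_four hkM hρ, hf2]
  · obtain ⟨m, rfl⟩ : ∃ m, k = m + 2 := ⟨k - 2, by omega⟩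
    have hq m' (h : 3 ≤ m') (h' : m' < m + 2) := ih m' h' h (by omega)
    rw [eval_assocPoly_succ, superEntry_mlClosureMatrix_of_three_le (by omega) (by omega),
      sum_lowEntry_mlClosureMatrix_succ_mul (by omega) (by omega) hf2, assocPoly_zero, eval_one,
      eval_assocPoly_mlClosureMatrix_one (by omega), eval_assocPoly_mlClosureMatrix_two (by omega) hρ,
      eval_assocPoly_mlClosureMatrix_three (by omega) hρ, hq m (by omega) (by omega),
      hq (m + 1) (by omega) (by omega), show m + 2 - 2 = m by omega,
      show m + 1 - 2 = m - 1 by omega, Nat.add_sub_cancel]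
    simp only [hermiteScaled]
    push_cast
    field_simp
    ring
end

/-- **The associated polynomials of `A^{ML}` in the Hermite basis (orders `0, …, M`).**
The matrix `A^{ML}` is an unreduced lower Hessenberg matrix, and its associated
polynomial sequence satisfies, with `z = (x − u)/√θ`:
`q_0 = 1`, `q_1 = (√θ/ρ)·He₁(z)`, `q_2 = (θ/ρ)·He₂(z)`, `q_3 = (θ^{3/2}/6)·He₃(z)`,
and for `4 ≤ k ≤ M`,
`q_k = (θ^{k/2}/k!)·He_k(z) − (θ f_{k−2}/(2ρ))·He₂(z) − (√θ f_{k−1}/ρ)·He₁(z)`. -/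
theorem assocPoly_mlClosureMatrix_hermite (M : ℕ) (hM : 6 ≤ M)
    (ρ u θ : ℝ) (hρ : 0 < ρ) (hθ : 0 < θ)
    (f : ℕ → ℝ) (hf1 : f 1 = 0) (hf2 : f 2 = 0) (a : ℕ → ℝ) :
    IsUnreducedLowerHessenberg (mlClosureMatrix M ρ u θ f a) ∧
    (∀ x : ℝ, (assocPoly (mlClosureMatrix M ρ u θ f a) 0).eval x = 1) ∧
    (∀ x : ℝ, (assocPoly (mlClosureMatrix M ρ u θ f a) 1).eval x =
      Real.sqrt θ / ρ * He 1 ((x - u) / Real.sqrt θ)) ∧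
    (∀ x : ℝ, (assocPoly (mlClosureMatrix M ρ u θ f a) 2).eval x =
      θ / ρ * He 2 ((x - u) / Real.sqrt θ)) ∧
    (∀ x : ℝ, (assocPoly (mlClosureMatrix M ρ u θ f a) 3).eval x =
      Real.sqrt θ ^ 3 / 6 * He 3 ((x - u) / Real.sqrt θ)) ∧
    (∀ k : ℕ, 4 ≤ k → k ≤ M → ∀ x : ℝ,
      (assocPoly (mlClosureMatrix M ρ u θ f a) k).eval x =
        Real.sqrt θ ^ k / (Nat.factorial k : ℝ) * He k ((x - u) / Real.sqrt θ) -
          θ * f (k - 2) / (2 * ρ) * He 2 ((x - u) / Real.sqrt θ) -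
          Real.sqrt θ * f (k - 1) / ρ * He 1 ((x - u) / Real.sqrt θ)) := by
  obtain ⟨s, hs, rfl⟩ : ∃ s, 0 < s ∧ θ = s ^ 2 := ⟨√θ, by positivity, (Real.sq_sqrt hθ.le).symm⟩
  simp only [Real.sqrt_sq hs.le]
  have hs0 := hs.ne'
  have hρ0 := hρ.ne'
  refine ⟨isUnreducedLowerHessenberg_mlClosureMatrix hρ0, fun x => by simp [assocPoly_zero],
    fun x => ?_, fun x => ?_, fun x => ?_, fun k hk hkM x => ?_⟩
  · rw [eval_assocPoly_mlClosureMatrix_one (by omega)]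
    simp only [He]
    field_simp
  · rw [eval_assocPoly_mlClosureMatrix_two (by omega) hρ0, He_two]
    field_simp
  · rw [eval_assocPoly_mlClosureMatrix_three (by omega) hρ0, hermiteScaled_sq s hs0]
    norm_num
  · rw [eval_assocPoly_mlClosureMatrix_of_three_le hρ0 hf1 hf2 (by omega) hkM,
      hermiteScaled_sq s hs0, He_two]
    simp only [He]
    field_simp
end

section
/- Fix M ≥ 6. Given real parameters ρ > 0, θ > 0, u ∈ ℝ and f_3, ..., f_M ∈ ℝ (with the conventions f_1 = f_2 = 0), let A^{ML} be the (M+1)×(M+1) real matrix with rows and columns indexed 1,...,M+1 whose first four rows are (u, ρ, 0, ..., 0), (θ/ρ, u, 1, 0, ..., 0), (0, 2θ, u, 6/ρ, 0, ..., 0), (0, 4f_3, ρθ/2, u, 4, 0, ..., 0); whose row k for 5 ≤ k ≤ M has entries h_{k,1} = −θ f_{k−2}/ρ, h_{k,2} = k f_{k−1}, h_{k,3} = (θ/2) f_{k−4} + ((k−2)/2) f_{k−2}, h_{k,4} = −(3/ρ) f_{k−3} (this entry only for k ≥ 6), h_{k,k−1} = θ, h_{k,k} = u, h_{k,k+1}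 = k, and all other entries 0; and whose last row (row M+1) is (a_0, a_1, ..., a_M) for given reals a_0, ..., a_M. Then the last associated polynomial q_{M+1} of the unreduced lower Hessenberg matrix A^{ML} satisfies, with z = (x − u)/√θ: q_{M+1}(x) = (θ^{(M+1)/2}/M!)·He_{M+1}(z) − (a_M − u)·(θ^{M/2}/M!)·He_M(z) + (θ^{(M+1)/2}/(M−1)! − a_{M−1}·θ^{(M−1)/2}/(M−1)!)·He_{M−1}(z) − Σ_{k=4}^{M−2} a_k·(θ^{k/2}/k!)·He_k(z) + (−θ^{3/2} f_{M−2}/(2ρ) − a_3·θ^{3/2}/6)·He_3(z) + (−θ f_{M−1}/ρ + (a_M − u)·θ f_{M−2}/(2ρ) + Σ_{k=6}^{M} a_{k−1}·θ f_{k−3}/(2ρ) − a_2·θ/ρ)·He_2(z) + (−θ^{3/2} f_{M−2}/ρ + (a_M − u)·θ^{1/2} f_{M−1}/ρ + Σ_{k=5}^{M} a_{k−1}·θ^{1/2} f_{k−2}/ρ − a_1·θ^{1/2}/ρ)·He_1(z) + (−θ f_{M−1}/ρ − a_0)·He_0(z), for all x ∈ ℝ. -/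
/-! Rows `5, …, M` of `A^{ML}` carry the Hermite recurrence
`k q_k = (x - u) q_{k-1} - θ q_{k-2}` up to corrections in their first four columns. With
`x = u + √θ z` these corrections only ever feed `He_1` and `He_2`, and using `f_1 = f_2 = 0` one
gets, for `3 ≤ k ≤ M`,
`q_k = θ^{k/2}/k! He_k(z) - √θ f_{k-1}/ρ He_1(z) - θ f_{k-2}/(2ρ) He_2(z)`.
The last row gives `q_{M+1} = x q_M - ∑ a_j q_j`; expanding `z He_M`, `z He_1`, `z He_2` by the
Hermite recurrence yields the formula. -/

open Nat

lemma Finset.sum_Icc_add_one_eq_sum_Ico {R : Type*} [AddCommMonoid R] (g : ℕ → R) (a b : ℕ) :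
    ∑ k ∈ Finset.Icc (a + 1) b, g k = ∑ j ∈ Finset.Ico a b, g (j + 1) := by
  rw [← Finset.Ico_add_one_right_eq_Icc, Finset.sum_Ico_add']

/-- `q i` plays the role of `q_i(x)`. Stating the row computations for an abstract `q` keeps
`simp` from unfolding the matrix inside `assocPoly`. -/
def IsAssocSeq {n : ℕ} (H : Matrix (Fin n) (Fin n) ℝ) (x : ℝ) (q : ℕ → ℝ) : Prop :=
  q 0 = 1 ∧ ∀ i, q (i + 1) = (superEntry H i)⁻¹ *
    (x * q i - ∑ j ∈ Finset.range (i + 1), lowEntry H i j * q j)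

section Hessenberg

variable {n : ℕ} (H : Matrix (Fin n) (Fin n) ℝ)

lemma isAssocSeq_assocPoly_eval (x : ℝ) : IsAssocSeq H x fun i => (assocPoly H i).eval x := by
  refine ⟨by simp [assocPoly], fun i => ?_⟩
  simp only [assocPoly, Polynomial.eval_mul, Polynomial.eval_C, Polynomial.eval_sub,
    Polynomial.eval_X, Polynomial.eval_finsetSum]
  rw [Fin.sum_univ_eq_sum_range (fun j => lowEntry H i j * (assocPoly H j).eval x)]

lemma superEntry_eq_lowEntry {i : ℕ} (h : i + 1 < n) :
    superEntry H i = lowEntry H i (i + 1) := by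
  rw [superEntry, lowEntry, dif_pos h, dif_pos ⟨by omega, h⟩]

lemma superEntry_of_le {i : ℕ} (h : n ≤ i + 1) : superEntry H i = 1 :=
  dif_neg (by omega)

end Hessenberg

lemma lowEntry_mlClosureMatrix {M : ℕ} {ρ u θ : ℝ} {f a : ℕ → ℝ} {i j : ℕ} (hi : i ≤ M)
    (hj : j ≤ M) :
    lowEntry (mlClosureMatrix M ρ u θ f a) i j =
      mlClosureMatrix M ρ u θ f a ⟨i, by omega⟩ ⟨j, by omega⟩ :=
  dif_pos ⟨by omega, by omega⟩

namespace IsAssocSeq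

section Rows

variable {M : ℕ} {ρ u θ x : ℝ} {f a q : ℕ → ℝ}
  (hq : IsAssocSeq (mlClosureMatrix M ρ u θ f a) x q)
include hq

lemma mlClosure_one (hM : 1 ≤ M) : q 1 = (x - u) / ρ := by
  rw [hq.2, superEntry_eq_lowEntry _ (by omega)]
  simp (disch := omega) only [Finset.sum_range_succ, Finset.sum_range_zero,
    lowEntry_mlClosureMatrix]
  simp [mlClosureMatrix, hq.1]
  ring

lemma mlClosure_two (hM : 2 ≤ M) : q 2 = (x - u) * q 1 - θ / ρ := by
  rw [hq.2, superEntry_eq_lowEntry _ (by omega)]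
  simp (disch := omega) only [Finset.sum_range_succ, Finset.sum_range_zero,
    lowEntry_mlClosureMatrix]
  simp [mlClosureMatrix, hq.1]
  ring

lemma mlClosure_three (hM : 3 ≤ M) : q 3 = ρ * ((x - u) * q 2 - 2 * θ * q 1) / 6 := by
  rw [hq.2, superEntry_eq_lowEntry _ (by omega)]
  simp (disch := omega) only [Finset.sum_range_succ, Finset.sum_range_zero,
    lowEntry_mlClosureMatrix]
  simp [mlClosureMatrix]
  ring

lemma mlClosure_four (hM : 4 ≤ M) :
    q 4 = ((x - u) * q 3 - 4 * f 3 * q 1 - ρ * θ / 2 * q 2) / 4 := by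
  rw [hq.2, superEntry_eq_lowEntry _ (by omega)]
  simp (disch := omega) only [Finset.sum_range_succ, Finset.sum_range_zero,
    lowEntry_mlClosureMatrix]
  simp [mlClosureMatrix]
  ring

lemma mlClosure_row (hf2 : f 2 = 0) {t : ℕ} (ht : t + 4 < M) :
    ((t : ℝ) + 5) * q (t + 5) = (x - u) * q (t + 4) - θ * q (t + 3) + θ * f (t + 3) / ρ
      - ((t : ℝ) + 5) * f (t + 4) * q 1
      - (θ / 2 * f (t + 1) + ((t : ℝ) + 3) / 2 * f (t + 3)) * q 2 + 3 / ρ * f (t + 2) * q 3 := by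
  rw [hq.2, superEntry_eq_lowEntry _ (by omega)]
  rcases t with _ | t
  -- in row 5 the fourth column is the subdiagonal, and the last term vanishes since `f 2 = 0`
  · simp (disch := omega) only [Finset.sum_range_succ, Finset.sum_range_zero,
      lowEntry_mlClosureMatrix]
    simp [mlClosureMatrix, show 4 < M by omega, hf2, hq.1]
    ring
  rw [Finset.sum_range_succ, Finset.sum_range_succ,
    ← Finset.sum_range_add_sum_Ico _ (show 4 ≤ t + 4 by omega),
    Finset.sum_eq_zero (s := Finset.Ico 4 (t + 4)) fun j hj => ?_]
  · simp (disch := omega) only [Finset.sum_range_succ, Finset.sum_range_zero,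
      lowEntry_mlClosureMatrix]
    simp [mlClosureMatrix, show t + 5 < M by omega, hq.1]
    field_simp
    ring
  · rw [Finset.mem_Ico] at hj
    rw [lowEntry_mlClosureMatrix (by omega) (by omega)]
    simp [mlClosureMatrix, show t + 5 < M by omega]
    split_ifs <;> first | rfl | omega

lemma mlClosure_top (hM : 4 ≤ M) :
    q (M + 1) = x * q M - ∑ j ∈ Finset.range (M + 1), a j * q j := by
  rw [hq.2, superEntry_of_le _ le_rfl, inv_one, one_mul]
  congr 1
  refine Finset.sum_congr rfl fun j hj => ?_
  rw [lowEntry_mlClosureMatrix le_rfl (by simp at hj; omega)]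
  simp [mlClosureMatrix]
  split_ifs <;> first | rfl | omega

end Rows

section Hermite

variable {M : ℕ} {ρ u s z : ℝ} {f a q : ℕ → ℝ}
  (hq : IsAssocSeq (mlClosureMatrix M ρ u (s ^ 2) f a) (u + s * z) q)
include hq

lemma mlClosure_one_eq_hermite (hM : 1 ≤ M) : q 1 = s / ρ * He 1 z := by
  rw [hq.mlClosure_one hM, He]
  ring

lemma mlClosure_two_eq_hermite (hM : 2 ≤ M) : q 2 = s ^ 2 / ρ * He 2 z := by
  rw [hq.mlClosure_two hM, hq.mlClosure_one (by omega)]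
  simp only [He]
  ring

lemma mlClosure_three_eq_hermite (hρ : ρ ≠ 0) (hM : 3 ≤ M) : q 3 = s ^ 3 / 6 * He 3 z := by
  rw [hq.mlClosure_three hM, hq.mlClosure_two_eq_hermite (by omega),
    hq.mlClosure_one_eq_hermite (by omega)]
  simp only [He]
  field_simp
  ring

lemma mlClosure_eq_hermite (hρ : ρ ≠ 0) (hf1 : f 1 = 0) (hf2 : f 2 = 0) {k : ℕ}
    (hk : 3 ≤ k) (hkM : k ≤ M) :
    q k = s ^ k / k ! * He k z - s * f (k - 1) / ρ * He 1 z
      - s ^ 2 * f (k - 2) / (2 * ρ) * He 2 z := by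
  induction k using Nat.strong_induction_on with
  | _ k ih =>
  obtain rfl | rfl | hk5 : k = 3 ∨ k = 4 ∨ 5 ≤ k := by omega
  · simp [hq.mlClosure_three_eq_hermite hρ hkM, hf1, hf2, factorial]
  · rw [hq.mlClosure_four hkM, hq.mlClosure_three_eq_hermite hρ (by omega),
      hq.mlClosure_two_eq_hermite (by omega), hq.mlClosure_one_eq_hermite (by omega)]
    simp [He, hf2, factorial]
    field_simp
    ring
  obtain ⟨t, rfl⟩ := Nat.exists_eq_add_of_le' hk5
  have h4 := ih (t + 4) (by omega) (by omega) (by omega)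
  have h3 := ih (t + 3) (by omega) (by omega) (by omega)
  apply mul_left_cancel₀ (show (t : ℝ) + 5 ≠ 0 by positivity)
  rw [hq.mlClosure_row hf2 (by omega), h4, h3, hq.mlClosure_one_eq_hermite (by omega),
    hq.mlClosure_two_eq_hermite (by omega), hq.mlClosure_three_eq_hermite hρ (by omega)]
  simp only [show t + 5 = t + 3 + 2 from rfl, He, factorial_succ]
  push_cast
  field_simp
  ring

lemma sum_Ico_mul_eq_hermite (hρ : ρ ≠ 0) (hf1 : f 1 = 0) (hf2 : f 2 = 0) {m : ℕ}
    (hm : m ≤ M + 1) :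
    ∑ j ∈ Finset.Ico 3 m, a j * q j =
      ∑ j ∈ Finset.Ico 3 m, a j * (s ^ j / j !) * He j z
        - (∑ j ∈ Finset.Ico 3 m, a j * s * f (j - 1) / ρ) * He 1 z
        - (∑ j ∈ Finset.Ico 3 m, a j * s ^ 2 * f (j - 2) / (2 * ρ)) * He 2 z := by
  rw [Finset.sum_mul, Finset.sum_mul, ← Finset.sum_sub_distrib, ← Finset.sum_sub_distrib]
  refine Finset.sum_congr rfl fun j hj => ?_
  rw [Finset.mem_Ico] at hj
  rw [hq.mlClosure_eq_hermite hρ hf1 hf2 hj.1 (by omega)]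
  ring

end Hermite

end IsAssocSeq

/-- **The last associated polynomial `q_{M+1}` of `A^{ML}` in the Hermite basis.**
With `z = (x − u)/√θ`, the polynomial `q_{M+1}` associated with the unreduced lower
Hessenberg matrix `A^{ML}` (whose last row is `(a_0, …, a_M)`) is an explicit
combination of `He_0(z), …, He_{M+1}(z)`. -/
theorem assocPoly_top_mlClosureMatrix_hermite (M : ℕ) (hM : 6 ≤ M)
    (ρ u θ : ℝ) (hρ : 0 < ρ) (hθ : 0 < θ)
    (f : ℕ → ℝ) (hf1 : f 1 = 0) (hf2 : f 2 = 0) (a : ℕ → ℝ) :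
    ∀ x : ℝ,
      (assocPoly (mlClosureMatrix M ρ u θ f a) (M + 1)).eval x =
        Real.sqrt θ ^ (M + 1) / (Nat.factorial M : ℝ) * He (M + 1) ((x - u) / Real.sqrt θ)
        - (a M - u) * (Real.sqrt θ ^ M / (Nat.factorial M : ℝ)) * He M ((x - u) / Real.sqrt θ)
        + (Real.sqrt θ ^ (M + 1) / (Nat.factorial (M - 1) : ℝ) -
            a (M - 1) * Real.sqrt θ ^ (M - 1) / (Nat.factorial (M - 1) : ℝ)) *
            He (M - 1) ((x - u) / Real.sqrt θ)
        - (∑ k ∈ Finset.Icc 4 (M - 2),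
            a k * (Real.sqrt θ ^ k / (Nat.factorial k : ℝ)) * He k ((x - u) / Real.sqrt θ))
        + (-(Real.sqrt θ ^ 3 * f (M - 2) / (2 * ρ)) - a 3 * Real.sqrt θ ^ 3 / 6) *
            He 3 ((x - u) / Real.sqrt θ)
        + (-(θ * f (M - 1) / ρ) + (a M - u) * θ * f (M - 2) / (2 * ρ) +
            (∑ k ∈ Finset.Icc 6 M, a (k - 1) * θ * f (k - 3) / (2 * ρ)) - a 2 * θ / ρ) *
            He 2 ((x - u) / Real.sqrt θ)
        + (-(Real.sqrt θ ^ 3 * f (M - 2) / ρ) + (a M - u) * Real.sqrt θ * f (M - 1) / ρ +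
            (∑ k ∈ Finset.Icc 5 M, a (k - 1) * Real.sqrt θ * f (k - 2) / ρ) -
            a 1 * Real.sqrt θ / ρ) * He 1 ((x - u) / Real.sqrt θ)
        + (-(θ * f (M - 1) / ρ) - a 0) * He 0 ((x - u) / Real.sqrt θ) := by
  intro x
  obtain ⟨n, rfl⟩ : ∃ n, M = n + 2 := ⟨M - 2, by omega⟩
  obtain ⟨s, hs, rfl⟩ : ∃ s : ℝ, 0 < s ∧ θ = s ^ 2 :=
    ⟨√θ, Real.sqrt_pos.2 hθ, (Real.sq_sqrt hθ.le).symm⟩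
  obtain ⟨z, rfl⟩ : ∃ z, x = u + s * z := ⟨(x - u) / s, by field_simp; ring⟩
  have hq := isAssocSeq_assocPoly_eval (mlClosureMatrix (n + 2) ρ u (s ^ 2) f a) (u + s * z)
  have hHeSum : ∑ j ∈ Finset.Ico 3 (n + 2), a j * (s ^ j / j !) * He j z =
      a 3 * (s ^ 3 / 3 !) * He 3 z + ∑ k ∈ Finset.Icc 4 n, a k * (s ^ k / k !) * He k z
        + a (n + 1) * (s ^ (n + 1) / (n + 1) !) * He (n + 1) z := by
    rw [Finset.sum_eq_sum_Ico_succ_bot (by omega), Finset.sum_Ico_succ_top (by omega),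
      Finset.Ico_add_one_right_eq_Icc, add_assoc]
  have hHe1Sum : ∑ k ∈ Finset.Icc 5 (n + 2), a (k - 1) * s * f (k - 2) / ρ =
      ∑ j ∈ Finset.Ico 3 (n + 2), a j * s * f (j - 1) / ρ := by
    rw [Finset.sum_Icc_add_one_eq_sum_Ico, Finset.sum_eq_sum_Ico_succ_bot (a := 3) (by omega)]
    simp [hf2]
  have hHe2Sum : ∑ k ∈ Finset.Icc 6 (n + 2), a (k - 1) * s ^ 2 * f (k - 3) / (2 * ρ) =
      ∑ j ∈ Finset.Ico 3 (n + 2), a j * s ^ 2 * f (j - 2) / (2 * ρ) := by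
    rw [Finset.sum_Icc_add_one_eq_sum_Ico, Finset.sum_eq_sum_Ico_succ_bot (a := 3) (by omega),
      Finset.sum_eq_sum_Ico_succ_bot (a := 4) (by omega)]
    simp [hf1, hf2]
  simp only [Real.sqrt_sq hs.le, show (u + s * z - u) / s = z by field_simp; ring,
    add_tsub_cancel_right, show n + 2 - 1 = n + 1 by omega]
  rw [hq.mlClosure_top (by omega), Finset.sum_range_succ,
    ← Finset.sum_range_add_sum_Ico _ (show 3 ≤ n + 2 by omega),
    hq.sum_Ico_mul_eq_hermite hρ.ne' hf1 hf2 (by omega), hHeSum, hHe1Sum, hHe2Sum]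
  simp only [Finset.sum_range_succ, Finset.sum_range_zero, hq.1,
    hq.mlClosure_one_eq_hermite (by omega), hq.mlClosure_two_eq_hermite (by omega),
    hq.mlClosure_eq_hermite hρ.ne' hf1 hf2 (show 3 ≤ n + 2 by omega) le_rfl,
    add_tsub_cancel_right, show n + 2 - 1 = n + 1 by omega, He, factorial,
    Nat.cast_mul, Nat.cast_succ]
  field_simp
  ring
end
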